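/- arXiv:2007.01237 — 3 statements merged into one kernel-verified Lean document; each statement's English description precedes it below -/
import Mathlib

section
/- Let T1 and T2 be independent real-valued random variables, each with distribution symmetric about 0 (i.e., T_i and -T_i have the same law). Let f : ℝ≥0 × ℝ≥0 → ℝ≥0 be any measurable function. Then the mirror statistic M = sign(T1·T2) · f(|T1|, |T2|) has distribution symmetric about 0, i.e., for every t, P(M > t) = P(M < -t). -/
open MeasureTheory ProbabilityTheory
open scoped NNReal

/-! By independence and the symmetry of `T1`, the pair `(-T1, T2)` has the same law as
`(T1, T2)`; since the mirror statistic is odd in its first argument, `-M` has the same law as `M`.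
-/

theorem Real.measurable_sign : Measurable Real.sign :=
  Measurable.ite measurableSet_Iio measurable_const
    (Measurable.ite measurableSet_Ioi measurable_const measurable_const)

theorem Real.measurable_nnabs : Measurable Real.nnabs :=
  funext Real.toNNReal_abs ▸ measurable_real_toNNReal.comp measurable_abs

noncomputable def mirrorStatistic (f : ℝ≥0 × ℝ≥0 → ℝ≥0) (p : ℝ × ℝ) : ℝ :=
  Real.sign (p.1 * p.2) * f (Real.nnabs p.1, Real.nnabs p.2)

theorem measurable_mirrorStatistic {f : ℝ≥0 × ℝ≥0 → ℝ≥0} (hf : Measurable f) :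
    Measurable (mirrorStatistic f) :=
  (Real.measurable_sign.comp (measurable_fst.mul measurable_snd)).mul
    (measurable_coe_nnreal_real.comp (hf.comp
      ((Real.measurable_nnabs.comp measurable_fst).prodMk
        (Real.measurable_nnabs.comp measurable_snd))))

theorem mirrorStatistic_neg_fst (f : ℝ≥0 × ℝ≥0 → ℝ≥0) (x y : ℝ) :
    mirrorStatistic f (-x, y) = -mirrorStatistic f (x, y) := by
  simp only [mirrorStatistic, neg_mul, Real.sign_neg, ← Real.toNNReal_abs, abs_neg]

theorem ProbabilityTheory.IdentDistrib.measure_gt_eq_measure_lt_neg {α : Type*}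
    [MeasurableSpace α] {μ : Measure α} {X : α → ℝ} (h : IdentDistrib X (-X) μ μ) (t : ℝ) :
    μ {ω | X ω > t} = μ {ω | X ω < -t} := by
  have := h.measure_mem_eq (measurableSet_Ioi (a := t))
  simpa only [Set.preimage, Set.mem_Ioi, Pi.neg_apply, lt_neg] using this

theorem mirror_statistic_symmetric_general
    {Ω : Type*} [MeasurableSpace Ω] (P : Measure Ω) [IsProbabilityMeasure P]
    (T1 T2 : Ω → ℝ) (hT1 : Measurable T1) (hT2 : Measurable T2)
    (hindep : IndepFun T1 T2 P)
    (hsym1 : Measure.map T1 P = Measure.map (fun ω => -T1 ω) P)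
    (f : ℝ≥0 × ℝ≥0 → ℝ≥0) (hf : Measurable f)
    (M : Ω → ℝ)
    (hM : ∀ ω, M ω = Real.sign (T1 ω * T2 ω) * (f (Real.nnabs (T1 ω), Real.nnabs (T2 ω)) : ℝ)) :
    ∀ t : ℝ, P {ω | M ω > t} = P {ω | M ω < -t} := by
  have hT1_neg : IdentDistrib T1 (-T1) P P := ⟨hT1.aemeasurable, hT1.neg.aemeasurable, hsym1⟩
  have hpair : IdentDistrib (fun ω ↦ (T1 ω, T2 ω)) (fun ω ↦ (-T1 ω, T2 ω)) P P :=
    hT1_neg.prodMk (.refl hT2.aemeasurable) hindep (hindep.comp measurable_neg measurable_id)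
  have hM_eq : M = mirrorStatistic f ∘ fun ω ↦ (T1 ω, T2 ω) := funext hM
  have hM_neg : IdentDistrib M (-M) P P := by
    convert hpair.comp (measurable_mirrorStatistic hf) using 1
    ext ω
    simp only [hM_eq, Pi.neg_apply, Function.comp_apply, mirrorStatistic_neg_fst]
  exact hM_neg.measure_gt_eq_measure_lt_neg

/-- If `T1` and `T2` are independent real random variables, each symmetric about 0,
then for any measurable `f : ℝ≥0 × ℝ≥0 → ℝ≥0`, the mirror statistic
`M = sign(T1 T2) * f(|T1|, |T2|)` is symmetric about 0: `P(M > t) = P(M < -t)` for all `t`. -/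
theorem mirror_statistic_symmetric
    {Ω : Type*} [MeasurableSpace Ω] (P : Measure Ω) [IsProbabilityMeasure P]
    (T1 T2 : Ω → ℝ) (hT1 : Measurable T1) (hT2 : Measurable T2)
    (hindep : IndepFun T1 T2 P)
    (hsym1 : Measure.map T1 P = Measure.map (fun ω => -T1 ω) P)
    (hsym2 : Measure.map T2 P = Measure.map (fun ω => -T2 ω) P)
    (f : ℝ≥0 × ℝ≥0 → ℝ≥0) (hf : Measurable f)
    (M : Ω → ℝ)
    (hM : ∀ ω, M ω = Real.sign (T1 ω * T2 ω) * (f (Real.nnabs (T1 ω), Real.nnabs (T2 ω)) : ℝ)) :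
    ∀ t : ℝ, P {ω | M ω > t} = P {ω | M ω < -t} :=
  mirror_statistic_symmetric_general P T1 T2 hT1 hT2 hindep hsym1 f hf M hM
end

section
/- Let T1, T2, Z be real random variables, with Z standard normal and independent of T1, and suppose sup_{t∈ℝ} |P(T2 > t | T1 = x) − Q(t)| ≤ ε for almost every x (in the sense that T2 given T1 is within ε of normal uniformly, with T2 independent of T1). Let f be nonnegative and increasing in each coordinate, and define M = sign(T1 T2) f(|T1|, |T2|) and M' = sign(T1 Z) f(|T1|, |Z|). Then for every t, |P(M > t) − P(M' > t)| ≤ 2ε. -/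
/-!
Condition on `T1 = x`. By independence, both tail probabilities are integrals, against the law
of `T1`, of the mass that the law of `T2`, resp. of `Z`, gives to the section
`{y | t < sign (x * y) * f |x| |y|}`. Since `f` is nondecreasing in its second argument, this
section is an upper set of `ℝ` when `x ≥ 0` and a lower set when `x ≤ 0`, so up to complement it
is `∅`, `ℝ`, `(a, ∞)` or `[a, ∞)`. Tail bounds on `(s, ∞)` pass to `[a, ∞)` by letting `s ↑ a`,
because the Gaussian has no atoms; hence every section gets masses within `ε` of each other, and
integrating over `x` gives the bound `ε ≤ 2ε`.
-/
open MeasureTheory ProbabilityTheory Set Filter Topology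

namespace Real

theorem sign_mul (x y : ℝ) : sign (x * y) = sign x * sign y := by
  rcases lt_trichotomy x 0 with hx | rfl | hx <;> rcases lt_trichotomy y 0 with hy | rfl | hy <;>
    simp [sign_of_pos, sign_of_neg, mul_pos_of_neg_of_neg, mul_neg_of_neg_of_pos,
      mul_neg_of_pos_of_neg, *]

theorem sign_nonneg {x : ℝ} (hx : 0 ≤ x) : 0 ≤ sign x := by
  rcases hx.eq_or_lt with rfl | hx
  · simp
  · simp [sign_of_pos hx]

theorem sign_nonpos {x : ℝ} (hx : x ≤ 0) : sign x ≤ 0 := by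
  simpa [sign_neg] using sign_nonneg (neg_nonneg.2 hx)

theorem measurable_sign_s7 : Measurable sign := by
  unfold sign
  exact Measurable.ite measurableSet_Iio measurable_const
    (Measurable.ite measurableSet_Ioi measurable_const measurable_const)

theorem monotone_sign_mul_comp_abs {g : ℝ → ℝ} (hg₀ : ∀ v, 0 ≤ v → 0 ≤ g v)
    (hg : MonotoneOn g (Ici 0)) : Monotone fun y => sign y * g |y| := by
  refine monotone_of_odd_of_monotoneOn_nonneg (fun y => by simp [sign_neg]) ?_
  intro y (hy : 0 ≤ y) y' (hy' : 0 ≤ y') hyy'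
  rcases hy.eq_or_lt with rfl | hy
  · simpa using mul_nonneg (sign_nonneg hy') (hg₀ _ (abs_nonneg y'))
  · simp only [sign_of_pos hy, sign_of_pos (hy.trans_le hyy'), abs_of_nonneg hy.le,
      abs_of_nonneg hy', one_mul]
    exact hg hy.le hy' hyy'

end Real

section UpperSetsOfReals

variable {μ ν : Measure ℝ} {ε : ℝ}

theorem measureReal_Ici_le_of_forall_measureReal_Ioi_le [IsFiniteMeasure μ] [IsFiniteMeasure ν]
    [NullSingletonClass ν] (h : ∀ s, μ.real (Ioi s) ≤ ν.real (Ioi s) + ε) (a : ℝ) :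
    μ.real (Ici a) ≤ ν.real (Ioi a) + ε := by
  have hδ : ∀ δ > 0, μ.real (Ici a) ≤ ν.real (Icc (a - δ) (a + δ)) + (ν.real (Ioi a) + ε) := by
    intro δ hδ
    have hcover : Ioi (a - δ) ⊆ Icc (a - δ) (a + δ) ∪ Ioi a := fun y (hy : a - δ < y) => by
      rcases le_or_gt y a with hya | hya
      · exact Or.inl ⟨hy.le, by linarith⟩
      · exact Or.inr hya
    calc μ.real (Ici a)
        ≤ μ.real (Ioi (a - δ)) := measureReal_mono (Ici_subset_Ioi.2 (by linarith))
      _ ≤ ν.real (Ioi (a - δ)) + ε := h _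
      _ ≤ ν.real (Icc (a - δ) (a + δ) ∪ Ioi a) + ε := by grw [measureReal_mono hcover]
      _ ≤ _ := by linarith [measureReal_union_le (μ := ν) (Icc (a - δ) (a + δ)) (Ioi a)]
  have hlim : Tendsto (fun δ => ν.real (Icc (a - δ) (a + δ)) + (ν.real (Ioi a) + ε))
      (𝓝[>] 0) (𝓝 (ν.real (Ioi a) + ε)) := by
    have := (ENNReal.tendsto_toReal ENNReal.zero_ne_top).comp (tendsto_measure_Icc ν a)
    simpa [measureReal_def] using
      (this.mono_left nhdsWithin_le_nhds).add_const (ν.real (Ioi a) + ε)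
  exact ge_of_tendsto hlim (eventually_nhdsWithin_of_forall hδ)

variable [IsProbabilityMeasure μ] [IsProbabilityMeasure ν] [NullSingletonClass ν]

theorem abs_measureReal_sub_le_of_isUpperSet (h : ∀ s, |μ.real (Ioi s) - ν.real (Ioi s)| ≤ ε)
    {S : Set ℝ} (hS : IsUpperSet S) : |μ.real S - ν.real S| ≤ ε := by
  have hε : 0 ≤ ε := (abs_nonneg _).trans (h 0)
  rcases S.eq_empty_or_nonempty with rfl | hne
  · simpa
  by_cases hbdd : BddBelow S
  swap
  · have : S = univ := eq_univ_of_forall fun y => by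
      obtain ⟨s, hs, hsy⟩ := not_bddBelow_iff.1 hbdd y
      exact hS hsy.le hs
    simpa [this]
  set a := sInf S
  have hIoi : Ioi a ⊆ S := fun y hy => by
    obtain ⟨s, hs, hsy⟩ := exists_lt_of_csInf_lt hne hy
    exact hS hsy.le hs
  have hIci : S ⊆ Ici a := fun s hs => csInf_le hbdd hs
  have hνS : ν.real S = ν.real (Ioi a) := le_antisymm
    ((measureReal_mono hIci).trans_eq (measureReal_congr Ioi_ae_eq_Ici).symm)
    (measureReal_mono hIoi)
  have hμIci : μ.real (Ici a) ≤ ν.real (Ioi a) + ε :=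
    measureReal_Ici_le_of_forall_measureReal_Ioi_le
      (fun s => by linarith [(abs_sub_le_iff.1 (h s)).1]) a
  have hμIoi := (abs_sub_le_iff.1 (h a)).2
  rw [abs_sub_le_iff, hνS]
  constructor
  · linarith [measureReal_mono (μ := μ) hIci]
  · linarith [measureReal_mono (μ := μ) hIoi]

theorem abs_measureReal_sub_le_of_isLowerSet (h : ∀ s, |μ.real (Ioi s) - ν.real (Ioi s)| ≤ ε)
    {S : Set ℝ} (hSm : MeasurableSet S) (hS : IsLowerSet S) : |μ.real S - ν.real S| ≤ ε := by
  have := abs_measureReal_sub_le_of_isUpperSet h hS.compl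
  rwa [measureReal_compl hSm, measureReal_compl hSm, probReal_univ, probReal_univ,
    sub_sub_sub_cancel_left, abs_sub_comm] at this

end UpperSetsOfReals

theorem abs_measureReal_prod_sub_le {α β : Type*} [MeasurableSpace α] [MeasurableSpace β]
    {μ : Measure α} [IsFiniteMeasure μ] {ν ν' : Measure β} [IsFiniteMeasure ν]
    [IsFiniteMeasure ν'] {A : Set (α × β)} (hA : MeasurableSet A) {ε : ℝ}
    (h : ∀ x, |ν.real (Prod.mk x ⁻¹' A) - ν'.real (Prod.mk x ⁻¹' A)| ≤ ε) :
    |(μ.prod ν).real A - (μ.prod ν').real A| ≤ ε * μ.real univ := by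
  have hsection : ∀ (ρ : Measure β) [IsFiniteMeasure ρ],
      (μ.prod ρ).real A = ∫ x, ρ.real (Prod.mk x ⁻¹' A) ∂μ := fun ρ _ => by
    rw [measureReal_def, Measure.prod_apply hA]
    exact (integral_toReal (measurable_measure_prodMk_left hA).aemeasurable
      (ae_of_all _ fun _ => measure_lt_top _ _)).symm
  have hint : ∀ (ρ : Measure β) [IsFiniteMeasure ρ],
      Integrable (fun x => ρ.real (Prod.mk x ⁻¹' A)) μ := fun ρ _ =>
    .of_bound (measurable_measure_prodMk_left hA).ennreal_toReal.aestronglyMeasurable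
      (ρ.real univ) (ae_of_all _ fun x => by
        rw [Real.norm_of_nonneg measureReal_nonneg]
        exact measureReal_mono (subset_univ _))
  rw [hsection, hsection, ← integral_sub (hint ν) (hint ν'), ← Real.norm_eq_abs]
  exact norm_integral_le_of_norm_le_const (ae_of_all _ h)

theorem ProbabilityTheory.IndepFun.measureReal_preimage_eq_prod {Ω β γ : Type*}
    [MeasurableSpace Ω] [MeasurableSpace β] [MeasurableSpace γ] {P : Measure Ω}
    [IsFiniteMeasure P] {X : Ω → β} {Y : Ω → γ} (hXY : IndepFun X Y P) (hX : Measurable X)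
    (hY : Measurable Y) {A : Set (β × γ)} (hA : MeasurableSet A) :
    P.real ((fun ω => (X ω, Y ω)) ⁻¹' A) = ((P.map X).prod (P.map Y)).real A := by
  rw [← (indepFun_iff_map_prod_eq_prod_map_map hX.aemeasurable hY.aemeasurable).1 hXY,
    map_measureReal_apply (hX.prodMk hY) hA]

noncomputable def mirrorStat (f : ℝ → ℝ → ℝ) (x y : ℝ) : ℝ := Real.sign (x * y) * f |x| |y|

section MirrorStatistic

variable {f : ℝ → ℝ → ℝ}

theorem measurable_mirrorStat (hf : Measurable fun uv : ℝ × ℝ => f uv.1 uv.2) :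
    Measurable fun p : ℝ × ℝ => mirrorStat f p.1 p.2 :=
  (Real.measurable_sign_s7.comp (measurable_fst.mul measurable_snd)).mul
    (hf.comp (measurable_fst.abs.prodMk measurable_snd.abs))

theorem mirrorStat_eq_sign_mul (x : ℝ) :
    mirrorStat f x = fun y => Real.sign x * (Real.sign y * f |x| |y|) := by
  funext y
  rw [mirrorStat, Real.sign_mul, mul_assoc]

theorem monotone_sign_mul_apply_abs (hf₀ : ∀ u v, 0 ≤ u → 0 ≤ v → 0 ≤ f u v)
    (hf : ∀ u, MonotoneOn (fun v => f u v) (Ici 0)) (x : ℝ) :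
    Monotone fun y => Real.sign y * f |x| |y| :=
  Real.monotone_sign_mul_comp_abs (fun v => hf₀ _ v (abs_nonneg x)) (hf |x|)

theorem monotone_mirrorStat (hf₀ : ∀ u v, 0 ≤ u → 0 ≤ v → 0 ≤ f u v)
    (hf : ∀ u, MonotoneOn (fun v => f u v) (Ici 0)) {x : ℝ} (hx : 0 ≤ x) :
    Monotone (mirrorStat f x) := by
  rw [mirrorStat_eq_sign_mul]
  exact (monotone_sign_mul_apply_abs hf₀ hf x).const_mul (Real.sign_nonneg hx)

theorem antitone_mirrorStat (hf₀ : ∀ u v, 0 ≤ u → 0 ≤ v → 0 ≤ f u v)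
    (hf : ∀ u, MonotoneOn (fun v => f u v) (Ici 0)) {x : ℝ} (hx : x ≤ 0) :
    Antitone (mirrorStat f x) := by
  rw [mirrorStat_eq_sign_mul]
  exact (monotone_sign_mul_apply_abs hf₀ hf x).const_mul_of_nonpos (Real.sign_nonpos hx)

theorem abs_measureReal_prod_mirrorStat_sub_le {μ ν ν' : Measure ℝ} [IsProbabilityMeasure μ]
    [IsProbabilityMeasure ν] [IsProbabilityMeasure ν'] [NullSingletonClass ν'] {ε : ℝ}
    (hf₀ : ∀ u v, 0 ≤ u → 0 ≤ v → 0 ≤ f u v)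
    (hf : ∀ u, MonotoneOn (fun v => f u v) (Ici 0))
    (hνν' : ∀ s, |ν.real (Ioi s) - ν'.real (Ioi s)| ≤ ε)
    (hfm : Measurable fun uv : ℝ × ℝ => f uv.1 uv.2) (t : ℝ) :
    |(μ.prod ν).real {p | t < mirrorStat f p.1 p.2} -
      (μ.prod ν').real {p | t < mirrorStat f p.1 p.2}| ≤ ε := by
  have hA : MeasurableSet {p : ℝ × ℝ | t < mirrorStat f p.1 p.2} :=
    measurableSet_lt measurable_const (measurable_mirrorStat hfm)
  simpa only [probReal_univ, mul_one] using abs_measureReal_prod_sub_le (μ := μ) hA fun x => by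
    rcases le_total 0 x with hx | hx
    · exact abs_measureReal_sub_le_of_isUpperSet hνν'
        ((isUpperSet_Ioi t).preimage (monotone_mirrorStat hf₀ hf hx))
    · exact abs_measureReal_sub_le_of_isLowerSet hνν' (measurable_prodMk_left hA)
        fun _ _ hab hb => hb.trans_le (antitone_mirrorStat hf₀ hf hx hab)

end MirrorStatistic

theorem mirror_statistic_tail_replacement_general
    {Ω : Type*} [MeasurableSpace Ω] (P : Measure Ω) [IsProbabilityMeasure P]
    (T1 T2 Z : Ω → ℝ) (hT1 : Measurable T1) (hT2 : Measurable T2) (hZ : Measurable Z)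
    (hZlaw : Measure.map Z P = gaussianReal 0 1)
    (hindepT : IndepFun T1 T2 P) (hindepZ : IndepFun T1 Z P)
    (Q : ℝ → ℝ) (hQ : ∀ s, Q s = 1 - cdf (gaussianReal 0 1) s)
    (ε : ℝ) (hε : 0 ≤ ε)
    (happrox : ∀ s : ℝ, |(P {ω | T2 ω > s}).toReal - Q s| ≤ ε)
    (f : ℝ → ℝ → ℝ) (hfnonneg : ∀ u v, 0 ≤ u → 0 ≤ v → 0 ≤ f u v)
    (hfmono2 : ∀ u, MonotoneOn (fun v => f u v) (Set.Ici 0))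
    (hfmeas : Measurable fun uv : ℝ × ℝ => f uv.1 uv.2)
    (M M' : Ω → ℝ)
    (hM : ∀ ω, M ω = Real.sign (T1 ω * T2 ω) * f |T1 ω| |T2 ω|)
    (hM' : ∀ ω, M' ω = Real.sign (T1 ω * Z ω) * f |T1 ω| |Z ω|) :
    ∀ t : ℝ, |(P {ω | M ω > t}).toReal - (P {ω | M' ω > t}).toReal| ≤ 2 * ε := by
  intro t
  have := Measure.isProbabilityMeasure_map (μ := P) hT1.aemeasurable
  have := Measure.isProbabilityMeasure_map (μ := P) hT2.aemeasurable
  have := nullSingletonClass_gaussianReal (μ := 0) one_ne_zero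
  have hsurvival : ∀ s, |(P.map T2).real (Ioi s) - (gaussianReal 0 1).real (Ioi s)| ≤ ε := by
    intro s
    have hγ : (gaussianReal 0 1).real (Ioi s) = Q s := by
      rw [hQ, cdf_eq_real, ← compl_Iic, measureReal_compl measurableSet_Iic, probReal_univ]
    rw [map_measureReal_apply hT2 measurableSet_Ioi, hγ]
    exact happrox s
  set A := {p : ℝ × ℝ | t < mirrorStat f p.1 p.2}
  have hA : MeasurableSet A := measurableSet_lt measurable_const (measurable_mirrorStat hfmeas)
  have hMA : {ω | M ω > t} = (fun ω => (T1 ω, T2 ω)) ⁻¹' A := by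
    ext ω; simp [A, hM, mirrorStat]
  have hM'A : {ω | M' ω > t} = (fun ω => (T1 ω, Z ω)) ⁻¹' A := by
    ext ω; simp [A, hM', mirrorStat]
  change |P.real _ - P.real _| ≤ _
  rw [hMA, hM'A, hindepT.measureReal_preimage_eq_prod hT1 hT2 hA,
    hindepZ.measureReal_preimage_eq_prod hT1 hZ hA, hZlaw]
  linarith [abs_measureReal_prod_mirrorStat_sub_le (μ := P.map T1) hfnonneg hfmono2 hsurvival
    hfmeas t]

/-- If `T2` is independent of `T1` with survival function uniformly within `ε` of the standard
normal survival function `Q`, and `Z` is standard normal independent of `T1`, then replacing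
`T2` by `Z` in the mirror statistic changes tail probabilities by at most `2ε`. -/
theorem mirror_statistic_tail_replacement
    {Ω : Type*} [MeasurableSpace Ω] (P : Measure Ω) [IsProbabilityMeasure P]
    (T1 T2 Z : Ω → ℝ) (hT1 : Measurable T1) (hT2 : Measurable T2) (hZ : Measurable Z)
    (hZlaw : Measure.map Z P = gaussianReal 0 1)
    (hindepT : IndepFun T1 T2 P) (hindepZ : IndepFun T1 Z P)
    (Q : ℝ → ℝ) (hQ : ∀ s, Q s = 1 - cdf (gaussianReal 0 1) s)
    (ε : ℝ) (hε : 0 ≤ ε)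
    (happrox : ∀ s : ℝ, |(P {ω | T2 ω > s}).toReal - Q s| ≤ ε)
    (f : ℝ → ℝ → ℝ) (hfnonneg : ∀ u v, 0 ≤ u → 0 ≤ v → 0 ≤ f u v)
    (hfmono1 : ∀ v, MonotoneOn (fun u => f u v) (Set.Ici 0))
    (hfmono2 : ∀ u, MonotoneOn (fun v => f u v) (Set.Ici 0))
    (hfmeas : Measurable fun uv : ℝ × ℝ => f uv.1 uv.2)
    (M M' : Ω → ℝ)
    (hM : ∀ ω, M ω = Real.sign (T1 ω * T2 ω) * f |T1 ω| |T2 ω|)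
    (hM' : ∀ ω, M' ω = Real.sign (T1 ω * Z ω) * f |T1 ω| |Z ω|) :
    ∀ t : ℝ, |(P {ω | M ω > t}).toReal - (P {ω | M' ω > t}).toReal| ≤ 2 * ε :=
  mirror_statistic_tail_replacement_general P T1 T2 Z hT1 hT2 hZ hZlaw hindepT hindepZ Q hQ ε hε
    happrox f hfnonneg hfmono2 hfmeas M M' hM hM'
end

section
/- (Mehler's identity consequence) Let (X, Y) be bivariate normal with standard normal marginals and correlation r ∈ (−1, 1), with joint CDF Φ_r. Then for all t1, t2, |Φ_r(t1, t2) − Φ(t1)Φ(t2)| ≤ K·|r| for a universal constant K, where Φ is the standard normal CDF. In particular, sup_{t1,t2} |Φ_r(t1,t2) − Φ(t1)Φ(t2)| → 0 as r → 0. -/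
/-!
Write `s = √(1 - r²)` and `γ` for the standard Gaussian. Conditioning on `Z1 = a`, the probability
equals `∫_{a ≤ t1} Φ((t2 - r a) / s) dγ(a)`. Since `Φ` is 1-Lipschitz and
`|Φ(t / s) - Φ(t)| ≤ 1/s - 1` (the density on the interval between `t` and `t / s` is at most
`e^{-t²/2}`, and `|t| e^{-t²/2} ≤ 1`), the integrand is within `|r| |a| / s + 1/s - 1` of `Φ(t2)`.
Integrating with `E|Z| ≤ 1` bounds the error by `|r| / s + 1/s - 1`, which is at most `4 |r|`
when `s ≥ 1/2`; when `s < 1/2`, `|r| > 1/4` and the trivial bound `1` suffices.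
-/

open MeasureTheory ProbabilityTheory Real Set
open scoped NNReal

lemma abs_cdf_gaussianReal_sub_le {m : ℝ} {v : ℝ≥0} (hv : v ≠ 0) {u w M : ℝ}
    (hM : ∀ x ∈ uIoc u w, gaussianPDFReal m v x ≤ M) :
    |cdf (gaussianReal m v) u - cdf (gaussianReal m v) w| ≤ M * |u - w| := by
  wlog huw : u ≤ w generalizing u w
  · rw [abs_sub_comm, abs_sub_comm u]
    exact this (uIoc_comm u w ▸ hM) (le_of_not_ge huw)
  rcases huw.eq_or_lt with rfl | huw
  · simp
  have hM0 : 0 ≤ M := (gaussianPDFReal_nonneg m v w).trans (hM w (by simp [huw]))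
  rw [abs_sub_comm, abs_of_nonneg (sub_nonneg.2 (monotone_cdf _ huw.le)), abs_sub_comm u,
    abs_of_nonneg (sub_nonneg.2 huw.le), ← ENNReal.ofReal_le_ofReal_iff (by positivity),
    ← StieltjesFunction.measure_Ioc, measure_cdf, gaussianReal_apply m hv]
  calc ∫⁻ x in Ioc u w, gaussianPDF m v x ≤ ∫⁻ _ in Ioc u w, ENNReal.ofReal M :=
        setLIntegral_mono measurable_const fun x hx =>
          ENNReal.ofReal_le_ofReal (hM x (by rwa [uIoc_of_le huw.le]))
    _ = ENNReal.ofReal (M * (w - u)) := by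
        rw [setLIntegral_const, volume_Ioc, ENNReal.ofReal_mul hM0]

lemma gaussianPDFReal_zero_one_le (x : ℝ) : gaussianPDFReal 0 1 x ≤ exp (-x ^ 2 / 2) := by
  have hc : (√(2 * π))⁻¹ ≤ 1 :=
    inv_le_one_of_one_le₀ (one_le_sqrt.2 (by linarith [pi_gt_three]))
  simpa [gaussianPDFReal] using mul_le_of_le_one_left (exp_nonneg _) hc

lemma lipschitzWith_cdf_gaussianReal_zero_one : LipschitzWith 1 (cdf (gaussianReal 0 1)) :=
  .of_dist_le_mul fun u w => by
    simpa [dist_eq] using abs_cdf_gaussianReal_sub_le one_ne_zero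
      fun x _ => (gaussianPDFReal_zero_one_le x).trans (exp_le_one_iff.2 (by nlinarith))

lemma abs_mul_exp_neg_sq_div_two_le_one (t : ℝ) : |t| * exp (-t ^ 2 / 2) ≤ 1 := by
  rw [neg_div, exp_neg, ← div_eq_mul_inv, div_le_one (exp_pos _)]
  nlinarith [add_one_le_exp (t ^ 2 / 2), sq_abs t, sq_nonneg (|t| - 1)]

lemma abs_le_abs_of_mem_uIoc_div {s t x : ℝ} (hs0 : 0 < s) (hs1 : s ≤ 1)
    (hx : x ∈ uIoc (t / s) t) : |t| ≤ |x| := by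
  rcases le_or_gt 0 t with ht | ht
  · have : t ≤ t / s := (le_div_iff₀ hs0).2 (by nlinarith)
    rw [abs_of_nonneg ht]
    exact le_abs.2 (.inl (by rcases mem_uIoc.1 hx with h | h <;> linarith [h.1, h.2]))
  · have : t / s ≤ t := (div_le_iff₀ hs0).2 (by nlinarith)
    rw [abs_of_neg ht]
    exact le_abs.2 (.inr (by rcases mem_uIoc.1 hx with h | h <;> linarith [h.1, h.2]))

lemma abs_cdf_gaussianReal_div_sub_le (t : ℝ) {s : ℝ} (hs0 : 0 < s) (hs1 : s ≤ 1) :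
    |cdf (gaussianReal 0 1) (t / s) - cdf (gaussianReal 0 1) t| ≤ 1 / s - 1 := by
  have hc : 0 ≤ 1 / s - 1 := sub_nonneg.2 (one_le_one_div hs0 hs1)
  refine (abs_cdf_gaussianReal_sub_le one_ne_zero (M := exp (-t ^ 2 / 2))
    fun x hx => ?_).trans ?_
  · refine (gaussianPDFReal_zero_one_le x).trans (exp_le_exp.2 ?_)
    have := sq_le_sq.2 (abs_le_abs_of_mem_uIoc_div hs0 hs1 hx)
    linarith
  · calc exp (-t ^ 2 / 2) * |t / s - t| = (|t| * exp (-t ^ 2 / 2)) * (1 / s - 1) := by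
          rw [show t / s - t = t * (1 / s - 1) by ring, abs_mul, abs_of_nonneg hc]; ring
      _ ≤ 1 * (1 / s - 1) := by gcongr; exact abs_mul_exp_neg_sq_div_two_le_one t
      _ = 1 / s - 1 := one_mul _

lemma integral_abs_gaussianReal_zero_one_le : ∫ x, |x| ∂gaussianReal 0 1 ≤ 1 := by
  have hsq : Integrable (fun x : ℝ => x ^ 2) (gaussianReal 0 1) :=
    (memLp_id_gaussianReal 2).integrable_sq
  have hmoment : ∫ x, x ^ 2 ∂gaussianReal 0 1 = 1 := by
    rw [← variance_of_integral_eq_zero aemeasurable_id' integral_id_gaussianReal,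
      variance_fun_id_gaussianReal, NNReal.coe_one]
  calc ∫ x, |x| ∂gaussianReal 0 1 ≤ ∫ x, (1 + x ^ 2) / 2 ∂gaussianReal 0 1 :=
        integral_mono_of_nonneg (.of_forall fun x => abs_nonneg x)
          (((integrable_const 1).add hsq).div_const 2)
          (.of_forall fun x => by nlinarith [sq_abs x, sq_nonneg (|x| - 1)])
    _ = 1 := by
        rw [integral_div, integral_add (integrable_const 1) hsq, hmoment]; norm_num

lemma integrable_cdf_comp (μ : Measure ℝ) [IsFiniteMeasure μ] (ν : Measure ℝ) {f : ℝ → ℝ}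
    (hf : Measurable f) : Integrable (fun a => cdf ν (f a)) μ :=
  .of_bound ((monotone_cdf ν).measurable.comp hf).aestronglyMeasurable 1
    (.of_forall fun a => by rw [norm_of_nonneg (cdf_nonneg _ _)]; exact cdf_le_one _ _)

lemma measurableSet_le_and_affine_le (r s t₁ t₂ : ℝ) :
    MeasurableSet {p : ℝ × ℝ | p.1 ≤ t₁ ∧ r * p.1 + s * p.2 ≤ t₂} :=
  (measurable_fst measurableSet_Iic).inter
    ((by fun_prop : Measurable fun p : ℝ × ℝ => r * p.1 + s * p.2) measurableSet_Iic)

lemma measureReal_prod_le_and_affine_le (μ ν : Measure ℝ) [IsFiniteMeasure μ]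
    [IsProbabilityMeasure ν] {r s : ℝ} (hs : 0 < s) (t₁ t₂ : ℝ) :
    (μ.prod ν).real {p : ℝ × ℝ | p.1 ≤ t₁ ∧ r * p.1 + s * p.2 ≤ t₂} =
      ∫ a in Iic t₁, cdf ν ((t₂ - r * a) / s) ∂μ := by
  have hsection (a : ℝ) : ν (Prod.mk a ⁻¹' {p : ℝ × ℝ | p.1 ≤ t₁ ∧ r * p.1 + s * p.2 ≤ t₂}) =
      (Iic t₁).indicator (fun a => ENNReal.ofReal (cdf ν ((t₂ - r * a) / s))) a := by
    by_cases ha : a ≤ t₁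
    · have : Prod.mk a ⁻¹' {p : ℝ × ℝ | p.1 ≤ t₁ ∧ r * p.1 + s * p.2 ≤ t₂} =
          Iic ((t₂ - r * a) / s) := by
        ext b
        simp only [mem_preimage, mem_ofPred_eq, mem_Iic, ha, true_and, le_div_iff₀ hs]
        constructor <;> intro h <;> linarith
      rw [this, indicator_of_mem (mem_Iic.2 ha), ofReal_cdf]
    · simp [ha]
  rw [measureReal_def, Measure.prod_apply (measurableSet_le_and_affine_le r s t₁ t₂),
    lintegral_congr hsection, lintegral_indicator measurableSet_Iic,
    ← ofReal_integral_eq_lintegral_ofReal (integrable_cdf_comp _ ν (by fun_prop))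
      (.of_forall fun a => cdf_nonneg _ _),
    ENNReal.toReal_ofReal (integral_nonneg fun a => cdf_nonneg _ _)]

lemma abs_cdf_gaussianReal_affine_sub_le (t r a : ℝ) {s : ℝ} (hs0 : 0 < s) (hs1 : s ≤ 1) :
    |cdf (gaussianReal 0 1) ((t - r * a) / s) - cdf (gaussianReal 0 1) t| ≤
      |r| / s * |a| + (1 / s - 1) := by
  calc _ ≤ |cdf (gaussianReal 0 1) ((t - r * a) / s) - cdf (gaussianReal 0 1) (t / s)| +
        |cdf (gaussianReal 0 1) (t / s) - cdf (gaussianReal 0 1) t| := abs_sub_le _ _ _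
    _ ≤ |(t - r * a) / s - t / s| + (1 / s - 1) := by
        refine add_le_add ?_ (abs_cdf_gaussianReal_div_sub_le t hs0 hs1)
        simpa [dist_eq] using lipschitzWith_cdf_gaussianReal_zero_one.dist_le_mul _ _
    _ = |r| / s * |a| + (1 / s - 1) := by
        rw [← sub_div, abs_div, abs_of_pos hs0, sub_sub_cancel_left, abs_neg, abs_mul]; ring

lemma abs_setIntegral_cdf_affine_sub_le (t₁ t₂ r : ℝ) {s : ℝ} (hs0 : 0 < s) (hs1 : s ≤ 1) :
    |∫ a in Iic t₁, cdf (gaussianReal 0 1) ((t₂ - r * a) / s) ∂gaussianReal 0 1 -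
        cdf (gaussianReal 0 1) t₁ * cdf (gaussianReal 0 1) t₂| ≤ |r| / s + (1 / s - 1) := by
  set γ := gaussianReal 0 1
  have hc : 0 ≤ 1 / s - 1 := sub_nonneg.2 (one_le_one_div hs0 hs1)
  have habs : Integrable (fun a : ℝ => |r| / s * |a|) γ :=
    ((memLp_id_gaussianReal 1).integrable le_rfl).abs.const_mul _
  have hbound : Integrable (fun a : ℝ => |r| / s * |a| + (1 / s - 1)) γ :=
    habs.add (integrable_const _)
  have hdiff : ∫ a in Iic t₁, cdf γ ((t₂ - r * a) / s) ∂γ - cdf γ t₁ * cdf γ t₂ =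
      ∫ a in Iic t₁, (cdf γ ((t₂ - r * a) / s) - cdf γ t₂) ∂γ := by
    rw [integral_sub (integrable_cdf_comp _ γ (by fun_prop)) (integrable_const _),
      setIntegral_const, cdf_eq_real, smul_eq_mul]
  calc _ = |∫ a in Iic t₁, (cdf γ ((t₂ - r * a) / s) - cdf γ t₂) ∂γ| := by rw [hdiff]
    _ ≤ ∫ a in Iic t₁, |cdf γ ((t₂ - r * a) / s) - cdf γ t₂| ∂γ := abs_integral_le_integral_abs
    _ ≤ ∫ a in Iic t₁, (|r| / s * |a| + (1 / s - 1)) ∂γ :=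
        integral_mono_of_nonneg (.of_forall fun a => abs_nonneg _) hbound.integrableOn
          (.of_forall fun a => abs_cdf_gaussianReal_affine_sub_le t₂ r a hs0 hs1)
    _ ≤ ∫ a, (|r| / s * |a| + (1 / s - 1)) ∂γ :=
        setIntegral_le_integral hbound (.of_forall fun a => add_nonneg (by positivity) hc)
    _ = |r| / s * ∫ a, |a| ∂γ + (1 / s - 1) := by
        rw [integral_add habs (integrable_const _),
          integral_const_mul, integral_const, probReal_univ, one_smul]
    _ ≤ |r| / s + (1 / s - 1) := by
        gcongr
        exact mul_le_of_le_one_right (by positivity) integral_abs_gaussianReal_zero_one_le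

lemma min_one_le_four_mul_abs {r : ℝ} (hr : r ∈ Ioo (-1) 1) :
    min 1 (|r| / √(1 - r ^ 2) + (1 / √(1 - r ^ 2) - 1)) ≤ 4 * |r| := by
  have hr2 : r ^ 2 < 1 := by nlinarith [hr.1, hr.2]
  have hs2 : √(1 - r ^ 2) ^ 2 = 1 - r ^ 2 := sq_sqrt (by linarith)
  have hs0 : 0 < √(1 - r ^ 2) := sqrt_pos.2 (by linarith)
  by_cases hs : 1 / 2 ≤ √(1 - r ^ 2)
  · refine min_le_of_right_le ?_
    rw [← add_sub_assoc, ← add_div, div_sub_one hs0.ne', div_le_iff₀ hs0]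
    nlinarith [sq_abs r, abs_nonneg r]
  · exact min_le_of_left_le (by nlinarith [sq_abs r, abs_nonneg r])

/-- (Mehler identity consequence.) For a bivariate normal pair with standard normal marginals
and correlation `r ∈ (-1,1)`, realized as `(Z1, r Z1 + √(1-r²) Z2)` with `Z1, Z2` i.i.d.
standard normal, the joint CDF satisfies `|Φ_r(t1,t2) - Φ(t1)Φ(t2)| ≤ K |r|` for a universal
constant `K`. -/
theorem bivariate_gaussian_cdf_near_independence
    {Ω : Type*} [MeasurableSpace Ω] (P : Measure Ω) [IsProbabilityMeasure P]
    (Z1 Z2 : Ω → ℝ) (hZ1 : Measurable Z1) (hZ2 : Measurable Z2)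
    (hindep : IndepFun Z1 Z2 P)
    (hlaw1 : Measure.map Z1 P = gaussianReal 0 1)
    (hlaw2 : Measure.map Z2 P = gaussianReal 0 1) :
    ∃ K > (0 : ℝ), ∀ r ∈ Set.Ioo (-1 : ℝ) 1, ∀ t1 t2 : ℝ,
      |(P {ω | Z1 ω ≤ t1 ∧ r * Z1 ω + Real.sqrt (1 - r ^ 2) * Z2 ω ≤ t2}).toReal -
        cdf (gaussianReal 0 1) t1 * cdf (gaussianReal 0 1) t2| ≤ K * |r| := by
  have hjoint : P.map (fun ω => (Z1 ω, Z2 ω)) = (gaussianReal 0 1).prod (gaussianReal 0 1) := by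
    rw [(indepFun_iff_map_prod_eq_prod_map_map hZ1.aemeasurable hZ2.aemeasurable).1 hindep,
      hlaw1, hlaw2]
  refine ⟨4, by norm_num, fun r hr t1 t2 => ?_⟩
  set s := √(1 - r ^ 2)
  have hs0 : 0 < s := sqrt_pos.2 (by nlinarith [hr.1, hr.2])
  have hs1 : s ≤ 1 := sqrt_le_one.2 (by nlinarith)
  have hevent : (P {ω | Z1 ω ≤ t1 ∧ r * Z1 ω + s * Z2 ω ≤ t2}).toReal =
      ∫ a in Iic t1, cdf (gaussianReal 0 1) ((t2 - r * a) / s) ∂gaussianReal 0 1 := by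
    rw [← measureReal_prod_le_and_affine_le _ _ hs0, ← hjoint,
      map_measureReal_apply (hZ1.prodMk hZ2) (measurableSet_le_and_affine_le r s t1 t2)]
    rfl
  refine le_trans (le_min ?_ ?_) (min_one_le_four_mul_abs hr)
  · exact abs_sub_le_of_nonneg_of_le measureReal_nonneg measureReal_le_one
      (mul_nonneg (cdf_nonneg _ _) (cdf_nonneg _ _))
      (mul_le_one₀ (cdf_le_one _ _) (cdf_nonneg _ _) (cdf_le_one _ _))
  · rw [hevent]
    exact abs_setIntegral_cdf_affine_sub_le t1 t2 r hs0 hs1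
end
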